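/- In a category of spaces, a morphism p: Z → Y with a triquotient assignment p_#: S^Z → S^Y satisfies p_#(1) = 1 and p_#(0) = 0 if and only if p_# ∘ S^p = Id_{S^Y}, i.e. p is a triquotient surjection. -/

import Mathlib

open CategoryTheory CategoryTheory.Limits

universe u v

variable {C : Type v} [Category.{v} C] [HasFiniteProducts C]

/-- The presheaf `S^X : Y ↦ C(Y × X, S)`. -/
noncomputable def pow (S X : C) : Cᵒᵖ ⥤ Type v where
  obj Z := (Opposite.unop Z ⨯ X) ⟶ S
  map f := TypeCat.ofHom fun u => prod.map f.unop (𝟙 X) ≫ u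
  map_id Z := by ext u; simp
  map_comp f g := by
    ext u
    show prod.map ((f ≫ g).unop) (𝟙 X) ≫ u
      = prod.map g.unop (𝟙 X) ≫ prod.map f.unop (𝟙 X) ≫ u
    rw [← Category.assoc, prod.map_map]; simp

/-- Contravariant action `S^f : S^Y ⟶ S^X` for `f : X ⟶ Y`. -/
noncomputable def powMap (S : C) {X Y : C} (f : X ⟶ Y) : pow S Y ⟶ pow S X where
  app Z := TypeCat.ofHom fun u => prod.map (𝟙 _) f ≫ u
  naturality Z W g := by
    ext u
    show prod.map (𝟙 _) f ≫ prod.map g.unop (𝟙 Y) ≫ u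
      = prod.map g.unop (𝟙 X) ≫ prod.map (𝟙 _) f ≫ u
    erw [← Category.assoc, ← Category.assoc, prod.map_map, prod.map_map]
    simp

@[simp] lemma powMap_id (S X : C) : powMap S (𝟙 X) = 𝟙 (pow S X) := by
  apply NatTrans.ext; funext Z; ext u; simp [powMap, pow]; rfl

@[simp] lemma powMap_comp (S : C) {X Y Z : C} (f : X ⟶ Y) (g : Y ⟶ Z) :
    powMap S (f ≫ g) = powMap S g ≫ powMap S f := by
  apply NatTrans.ext; funext W; ext u
  show prod.map (𝟙 _) (f ≫ g) ≫ u = prod.map (𝟙 _) f ≫ prod.map (𝟙 _) g ≫ u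
  erw [← Category.assoc, prod.map_map]; simp

/-- The presheaf `Y ↦ Nat(S^X, S^Y)`, i.e. the double exponential `(yS)^{S^X}`
described by its points. -/
noncomputable def doublePresheaf (S X : C) : Cᵒᵖ ⥤ Type v where
  obj Y := pow S X ⟶ pow S (Opposite.unop Y)
  map h := TypeCat.ofHom fun δ => δ ≫ powMap S h.unop
  map_id Y := by ext : 2; simp; rfl
  map_comp h k := by ext : 2; simp; rfl

section LatticeOps

variable {S : C}

/-- Pointwise top element. -/
noncomputable def elTop (top : ⊤_ C ⟶ S) {W : C} : W ⟶ S := terminal.from W ≫ top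
/-- Pointwise bottom element. -/
noncomputable def elBot (bot : ⊤_ C ⟶ S) {W : C} : W ⟶ S := terminal.from W ≫ bot
/-- Pointwise binary meet. -/
noncomputable def elMeet (meet : S ⨯ S ⟶ S) {W : C} (u v : W ⟶ S) : W ⟶ S :=
  prod.lift u v ≫ meet
/-- Pointwise binary join. -/
noncomputable def elJoin (join : S ⨯ S ⟶ S) {W : C} (u v : W ⟶ S) : W ⟶ S :=
  prod.lift u v ≫ join

/-- A natural transformation `S^X ⟶ S^Y` is a distributive lattice homomorphism if it
preserves the (pointwise) finite meets and joins. -/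
def IsDLHom (top bot : ⊤_ C ⟶ S) (meet join : S ⨯ S ⟶ S) {X Y : C}
    (α : pow S X ⟶ pow S Y) : Prop :=
  (∀ Z : Cᵒᵖ, α.app Z (elTop top) = elTop top) ∧
  (∀ Z : Cᵒᵖ, α.app Z (elBot bot) = elBot bot) ∧
  (∀ (Z : Cᵒᵖ) (u v : (pow S X).obj Z), α.app Z (elMeet meet u v) = elMeet meet (α.app Z u) (α.app Z v)) ∧
  (∀ (Z : Cᵒᵖ) (u v : (pow S X).obj Z), α.app Z (elJoin join u v) = elJoin join (α.app Z u) (α.app Z v))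

/-- A join semilattice homomorphism `S^X ⟶ S^Y` (preserves `0` and binary joins). -/
def IsJoinHom (bot : ⊤_ C ⟶ S) (join : S ⨯ S ⟶ S) {X Y : C} (α : pow S X ⟶ pow S Y) : Prop :=
  (∀ Z : Cᵒᵖ, α.app Z (elBot bot) = elBot bot) ∧
  (∀ (Z : Cᵒᵖ) (u v : (pow S X).obj Z), α.app Z (elJoin join u v) = elJoin join (α.app Z u) (α.app Z v))

/-- A meet semilattice homomorphism `S^X ⟶ S^Y` (preserves `1` and binary meets). -/
def IsMeetHom (top : ⊤_ C ⟶ S) (meet : S ⨯ S ⟶ S) {X Y : C} (α : pow S X ⟶ pow S Y) : Prop :=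
  (∀ Z : Cᵒᵖ, α.app Z (elTop top) = elTop top) ∧
  (∀ (Z : Cᵒᵖ) (u v : (pow S X).obj Z), α.app Z (elMeet meet u v) = elMeet meet (α.app Z u) (α.app Z v))

/-- Pointwise meet of two natural transformations into `S^X`. -/
noncomputable def meetNat (meet : S ⨯ S ⟶ S) {F : Cᵒᵖ ⥤ Type v} {X : C}
    (α β : F ⟶ pow S X) : F ⟶ pow S X where
  app Z := TypeCat.ofHom fun u => elMeet meet (α.app Z u) (β.app Z u)
  naturality Z W g := by
    ext u
    have hα := ConcreteCategory.congr_hom (α.naturality g) u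
    have hβ := ConcreteCategory.congr_hom (β.naturality g) u
    simp only [types_comp_apply] at hα hβ
    show elMeet meet (α.app W (F.map g u)) (β.app W (F.map g u))
      = prod.map g.unop (𝟙 X) ≫ elMeet meet (α.app Z u) (β.app Z u)
    rw [hα, hβ]
    show elMeet meet (prod.map g.unop (𝟙 X) ≫ α.app Z u) (prod.map g.unop (𝟙 X) ≫ β.app Z u) = _
    unfold elMeet
    erw [prod.comp_lift_assoc]

/-- Pointwise join of two natural transformations into `S^X`. -/
noncomputable def joinNat (join : S ⨯ S ⟶ S) {F : Cᵒᵖ ⥤ Type v} {X : C}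
    (α β : F ⟶ pow S X) : F ⟶ pow S X where
  app Z := TypeCat.ofHom fun u => elJoin join (α.app Z u) (β.app Z u)
  naturality Z W g := by
    ext u
    have hα := ConcreteCategory.congr_hom (α.naturality g) u
    have hβ := ConcreteCategory.congr_hom (β.naturality g) u
    simp only [types_comp_apply] at hα hβ
    show elJoin join (α.app W (F.map g u)) (β.app W (F.map g u))
      = prod.map g.unop (𝟙 X) ≫ elJoin join (α.app Z u) (β.app Z u)
    rw [hα, hβ]
    show elJoin join (prod.map g.unop (𝟙 X) ≫ α.app Z u) (prod.map g.unop (𝟙 X) ≫ β.app Z u) = _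
    unfold elJoin
    erw [prod.comp_lift_assoc]

end LatticeOps

/-- The natural transformation `S^{(X+X)+Y} ⟶ S^X` given by
`(u,v,w) ↦ u ⊓ (v ⊔ S^f(w))`, used in the statement of Axiom 7. -/
noncomputable def phiNat {S : C} (meet join : S ⨯ S ⟶ S) [HasBinaryCoproducts C]
    {X Y : C} (f : X ⟶ Y) : pow S ((X ⨿ X) ⨿ Y) ⟶ pow S X :=
  meetNat meet (powMap S ((coprod.inl : X ⟶ X ⨿ X) ≫ coprod.inl))
    (joinNat join (powMap S ((coprod.inr : X ⟶ X ⨿ X) ≫ coprod.inl))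
      (powMap S (coprod.inr : Y ⟶ (X ⨿ X) ⨿ Y) ≫ powMap S f))

noncomputable instance powPartialOrder [∀ A B : C, PartialOrder (A ⟶ B)] (S X : C) (Z : Cᵒᵖ) :
    PartialOrder ((pow S X).obj Z) :=
  inferInstanceAs (PartialOrder (Opposite.unop Z ⨯ X ⟶ S))

/-- A *category of spaces*: an order-enriched category with (order-enriched) finite limits
and finite coproducts (Axiom 1), pullback-stable coproducts (Axiom 2), a Sierpiński object
`S` (Axiom 3) which is double exponentiable (Axiom 4), such that distributive lattice
homomorphisms between double exponentials are represented by morphisms (Axiom 5),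
(de/in)flationary idempotents split in the (upper/lower) power Kleisli categories (Axiom 6),
and `S^(-)` sends equalizers to coequalizers of the appropriate pairs (Axiom 7). -/
class CategoryOfSpaces (C : Type v) [Category.{v} C] [∀ X Y : C, PartialOrder (X ⟶ Y)]
    [HasFiniteLimits C] [HasFiniteCoproducts C] : Type v where
  /-- composition is monotone (order enrichment) -/
  comp_le : ∀ {X Y Z : C} {f f' : X ⟶ Y} {g g' : Y ⟶ Z}, f ≤ f' → g ≤ g' → f ≫ g ≤ f' ≫ g'
  /-- the universal property of products is order-enriched -/
  lift_le : ∀ {X Y Z : C} {f f' : X ⟶ Y} {g g' : X ⟶ Z}, f ≤ f' → g ≤ g' →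
    prod.lift f g ≤ prod.lift f' g'
  /-- Axiom 2: pullback preserves finite coproducts -/
  pullback_preserves_coproducts : ∀ {X Y : C} (f : X ⟶ Y),
    Nonempty (PreservesFiniteCoproducts (Over.pullback f))
  /-- Axiom 3: the Sierpiński object -/
  S : C
  top : ⊤_ C ⟶ S
  bot : ⊤_ C ⟶ S
  meet : S ⨯ S ⟶ S
  join : S ⨯ S ⟶ S
  /-- `1 : 1 ⟶ S` is right adjoint to `! : S ⟶ 1` -/
  top_adj : 𝟙 S ≤ terminal.from S ≫ top
  /-- `0 : 1 ⟶ S` is left adjoint to `! : S ⟶ 1` -/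
  bot_adj : terminal.from S ≫ bot ≤ 𝟙 S
  /-- `⊓` is right adjoint to the diagonal -/
  meet_unit : 𝟙 S ≤ prod.lift (𝟙 S) (𝟙 S) ≫ meet
  meet_counit : meet ≫ prod.lift (𝟙 S) (𝟙 S) ≤ 𝟙 (S ⨯ S)
  /-- `⊔` is left adjoint to the diagonal -/
  join_unit : 𝟙 (S ⨯ S) ≤ join ≫ prod.lift (𝟙 S) (𝟙 S)
  join_counit : prod.lift (𝟙 S) (𝟙 S) ≫ join ≤ 𝟙 S
  /-- `S` is a distributive lattice -/
  distrib : prod.map (𝟙 S) join ≫ meet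
    = prod.lift (prod.map (𝟙 S) prod.fst ≫ meet) (prod.map (𝟙 S) prod.snd ≫ meet) ≫ join
  /-- a morphism into `S` is determined by the pullback of `1` -/
  sierp_top : ∀ {X : C} (a b : X ⟶ S),
    (∀ {T : C} (x : T ⟶ X), x ≫ a = terminal.from T ≫ top ↔ x ≫ b = terminal.from T ≫ top) →
    a = b
  /-- a morphism into `S` is determined by the pullback of `0` -/
  sierp_bot : ∀ {X : C} (a b : X ⟶ S),
    (∀ {T : C} (x : T ⟶ X), x ≫ a = terminal.from T ≫ bot ↔ x ≫ b = terminal.from T ≫ bot) →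
    a = b
  /-- Axiom 4: `S` is double exponentiable -/
  double_exp : ∀ X : C, ∃ P : C, Nonempty (doublePresheaf S X ≅ yoneda.obj P)
  /-- Axiom 5 -/
  ax5 : ∀ {X Y : C} (α : pow S X ⟶ pow S Y), IsDLHom top bot meet join α →
    ∃! f : Y ⟶ X, α = powMap S f
  /-- Axiom 6 (i): inflationary idempotents split in the lower power Kleisli category -/
  ax6L : ∀ {X : C} (α : pow S X ⟶ pow S X), IsJoinHom bot join α →
    (∀ (Z : Cᵒᵖ) (u : Opposite.unop Z ⨯ X ⟶ S), u ≤ (α.app Z u : Opposite.unop Z ⨯ X ⟶ S)) →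
    α ≫ α = α →
    ∃ (X₀ : C) (θ : pow S X₀ ⟶ pow S X) (γ : pow S X ⟶ pow S X₀),
      IsJoinHom bot join θ ∧ IsJoinHom bot join γ ∧ γ ≫ θ = α ∧ θ ≫ γ = 𝟙 (pow S X₀)
  /-- Axiom 6 (ii): deflationary idempotents split in the upper power Kleisli category -/
  ax6U : ∀ {X : C} (α : pow S X ⟶ pow S X), IsMeetHom top meet α →
    (∀ (Z : Cᵒᵖ) (u : Opposite.unop Z ⨯ X ⟶ S), (α.app Z u : Opposite.unop Z ⨯ X ⟶ S) ≤ u) →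
    α ≫ α = α →
    ∃ (X₀ : C) (θ : pow S X₀ ⟶ pow S X) (γ : pow S X ⟶ pow S X₀),
      IsMeetHom top meet θ ∧ IsMeetHom top meet γ ∧ γ ≫ θ = α ∧ θ ≫ γ = 𝟙 (pow S X₀)
  /-- Axiom 7 -/
  ax7 : ∀ {E X Y : C} (e : E ⟶ X) (f g : X ⟶ Y) (w : e ≫ f = e ≫ g),
    Nonempty (IsLimit (Fork.ofι e w)) →
    phiNat meet join f ≫ powMap S e = phiNat meet join g ≫ powMap S e ∧
    ∀ {W : C} (κ : pow S X ⟶ pow S W), phiNat meet join f ≫ κ = phiNat meet join g ≫ κ →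
      ∃! κ' : pow S E ⟶ pow S W, κ = powMap S e ≫ κ'

variable {C : Type v} [Category.{v} C] [∀ X Y : C, PartialOrder (X ⟶ Y)]
  [HasFiniteLimits C] [HasFiniteCoproducts C] [SC : CategoryOfSpaces C]

/-- The Sierpiński object of a category of spaces. -/
noncomputable def Sierp (C : Type v) [Category.{v} C] [∀ X Y : C, PartialOrder (X ⟶ Y)]
    [HasFiniteLimits C] [HasFiniteCoproducts C] [SC : CategoryOfSpaces C] : C := SC.S

/-- `E` witnesses that `f` is an open map: `E ⊣ S^f` and the Frobenius condition holds. -/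
def IsOpenVia {X Y : C} (f : X ⟶ Y) (E : pow (Sierp C) X ⟶ pow (Sierp C) Y) : Prop :=
  (∀ (Z : Cᵒᵖ) (u : Opposite.unop Z ⨯ X ⟶ Sierp C) (v : Opposite.unop Z ⨯ Y ⟶ Sierp C),
      (E.app Z u : Opposite.unop Z ⨯ Y ⟶ Sierp C) ≤ v ↔
        u ≤ ((powMap (Sierp C) f).app Z v : Opposite.unop Z ⨯ X ⟶ Sierp C)) ∧
  (∀ (Z : Cᵒᵖ) (u : Opposite.unop Z ⨯ X ⟶ Sierp C) (v : Opposite.unop Z ⨯ Y ⟶ Sierp C),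
      E.app Z (elMeet SC.meet u ((powMap (Sierp C) f).app Z v))
        = elMeet SC.meet (E.app Z u) v)

/-- A morphism is open if some `∃_f` witnesses it. -/
def IsOpenMor {X Y : C} (f : X ⟶ Y) : Prop := ∃ E, IsOpenVia f E

/-- An object is open if the unique map to the terminal object is open. -/
def IsOpenOb (X : C) : Prop := IsOpenMor (terminal.from X)

/-- `p#` is a triquotient assignment on `p`. -/
def IsTriqAssign {Z Y : C} (p : Z ⟶ Y) (ph : pow (Sierp C) Z ⟶ pow (Sierp C) Y) : Prop :=
  (∀ (W : Cᵒᵖ) (u : Opposite.unop W ⨯ Z ⟶ Sierp C) (v : Opposite.unop W ⨯ Y ⟶ Sierp C),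
      elMeet SC.meet (ph.app W u) v
        ≤ (ph.app W (elMeet SC.meet u ((powMap (Sierp C) p).app W v))
            : Opposite.unop W ⨯ Y ⟶ Sierp C)) ∧
  (∀ (W : Cᵒᵖ) (u : Opposite.unop W ⨯ Z ⟶ Sierp C) (v : Opposite.unop W ⨯ Y ⟶ Sierp C),
      (ph.app W (elJoin SC.join u ((powMap (Sierp C) p).app W v))
          : Opposite.unop W ⨯ Y ⟶ Sierp C) ≤ elJoin SC.join (ph.app W u) v)

/-- `p` is a triquotient surjection. -/
def IsTriqSurj {Z Y : C} (p : Z ⟶ Y) : Prop :=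
  ∃ ph, IsTriqAssign p ph ∧ powMap (Sierp C) p ≫ ph = 𝟙 (pow (Sierp C) Y)

lemma le_elTop {W : C} (a : W ⟶ SC.S) : a ≤ elTop SC.top := by
  simpa only [elTop, Category.comp_id, ← Category.assoc, terminal.comp_from] using
    SC.comp_le (le_refl a) SC.top_adj

lemma elBot_le {W : C} (a : W ⟶ SC.S) : elBot SC.bot ≤ a := by
  simpa only [elBot, Category.comp_id, ← Category.assoc, terminal.comp_from] using
    SC.comp_le (le_refl a) SC.bot_adj

lemma elMeet_le_right {W : C} (u v : W ⟶ SC.S) : elMeet SC.meet u v ≤ v := by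
  simpa only [elMeet, Category.assoc, Category.comp_id, prod.lift_snd] using
    SC.comp_le (SC.comp_le (le_refl (prod.lift u v)) SC.meet_counit) (le_refl prod.snd)

lemma le_elMeet {W : C} {a u v : W ⟶ SC.S} (hu : a ≤ u) (hv : a ≤ v) :
    a ≤ elMeet SC.meet u v := by
  have ha : a ≤ prod.lift a a ≫ SC.meet := by
    simpa only [Category.comp_id, prod.comp_lift_assoc] using
      SC.comp_le (le_refl a) SC.meet_unit
  exact ha.trans (SC.comp_le (SC.lift_le hu hv) le_rfl)

lemma elJoin_le {W : C} {a u v : W ⟶ SC.S} (hu : u ≤ a) (hv : v ≤ a) :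
    elJoin SC.join u v ≤ a := by
  have ha : prod.lift a a ≫ SC.join ≤ a := by
    simpa only [Category.comp_id, prod.comp_lift_assoc] using
      SC.comp_le (le_refl a) SC.join_counit
  exact (SC.comp_le (SC.lift_le hu hv) le_rfl).trans ha

lemma le_elJoin_right {W : C} (u v : W ⟶ SC.S) : v ≤ elJoin SC.join u v := by
  simpa only [elJoin, Category.assoc, Category.comp_id, prod.lift_snd] using
    SC.comp_le (SC.comp_le (le_refl (prod.lift u v)) SC.join_unit) (le_refl prod.snd)

lemma elTop_elMeet {W : C} (v : W ⟶ SC.S) : elMeet SC.meet (elTop SC.top) v = v :=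
  (elMeet_le_right _ _).antisymm (le_elMeet (le_elTop v) le_rfl)

lemma elBot_elJoin {W : C} (v : W ⟶ SC.S) : elJoin SC.join (elBot SC.bot) v = v :=
  (elJoin_le (elBot_le v) le_rfl).antisymm (le_elJoin_right _ _)

lemma powMap_app_elTop {X Y : C} (f : X ⟶ Y) (W : Cᵒᵖ) :
    (powMap (Sierp C) f).app W (elTop SC.top) = elTop SC.top := by
  show prod.map (𝟙 _) f ≫ terminal.from _ ≫ SC.top = terminal.from _ ≫ SC.top
  rw [← Category.assoc, terminal.comp_from]

lemma powMap_app_elBot {X Y : C} (f : X ⟶ Y) (W : Cᵒᵖ) :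
    (powMap (Sierp C) f).app W (elBot SC.bot) = elBot SC.bot := by
  show prod.map (𝟙 _) f ≫ terminal.from _ ≫ SC.bot = terminal.from _ ≫ SC.bot
  rw [← Category.assoc, terminal.comp_from]

namespace IsTriqAssign

variable {Z Y : C} {p : Z ⟶ Y} {ph : pow (Sierp C) Z ⟶ pow (Sierp C) Y}

lemma le_app_powMap (hph : IsTriqAssign p ph) {W : Cᵒᵖ}
    (htop : ph.app W (elTop SC.top) = elTop SC.top) (v : Opposite.unop W ⨯ Y ⟶ Sierp C) :
    v ≤ ph.app W ((powMap (Sierp C) p).app W v) := by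
  have h := hph.1 W (elTop SC.top) v
  rw [htop] at h
  erw [elTop_elMeet, elTop_elMeet] at h
  exact h

lemma app_powMap_le (hph : IsTriqAssign p ph) {W : Cᵒᵖ}
    (hbot : ph.app W (elBot SC.bot) = elBot SC.bot) (v : Opposite.unop W ⨯ Y ⟶ Sierp C) :
    ph.app W ((powMap (Sierp C) p).app W v) ≤ v := by
  have h := hph.2 W (elBot SC.bot) v
  rw [hbot] at h
  erw [elBot_elJoin, elBot_elJoin] at h
  exact h

end IsTriqAssign

/-- A morphism with a triquotient assignment `p#` satisfies `p#(1) = 1` and `p#(0) = 0`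
if and only if `p# ∘ S^p = Id`, i.e. `p` is a triquotient surjection via `p#`. -/
theorem triq_assignment_surjection_iff {Z Y : C} (p : Z ⟶ Y)
    (ph : pow (Sierp C) Z ⟶ pow (Sierp C) Y) (hph : IsTriqAssign p ph) :
    ((∀ W : Cᵒᵖ, ph.app W (elTop SC.top) = elTop SC.top) ∧
     (∀ W : Cᵒᵖ, ph.app W (elBot SC.bot) = elBot SC.bot)) ↔
    powMap (Sierp C) p ≫ ph = 𝟙 (pow (Sierp C) Y) := by
  constructor
  · rintro ⟨htop, hbot⟩
    ext W v
    exact (hph.app_powMap_le (hbot W) v).antisymm (hph.le_app_powMap (htop W) v)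
  · intro h
    have hfix (W : Cᵒᵖ) (v : Opposite.unop W ⨯ Y ⟶ Sierp C) :
        ph.app W ((powMap (Sierp C) p).app W v) = v :=
      ConcreteCategory.congr_hom (NatTrans.congr_app h W) v
    exact ⟨fun W => by simpa only [powMap_app_elTop] using hfix W (elTop SC.top),
      fun W => by simpa only [powMap_app_elBot] using hfix W (elBot SC.bot)⟩
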